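/- arXiv:2205.06571 — 2 statements merged into one kernel-verified Lean document; each statement's English description precedes it below -/
import Mathlib

section
/- Let q = (q_n)_{n=0}^∞ be positive integers, c = (c^{(n)})_{n=0}^∞ with c^{(n)} = (c^{(n)}_0,…,c^{(n)}_{q_n}) positive integers, W^{(n)}_m ∈ ℝ^{c^{(n)}_m × c^{(n)}_{m−1}} weight matrices and b^{(n)}_m ∈ ℝ^{c^{(n)}_m} bias vectors. If for every choice of activation matrices J^{(n)}_m ∈ 𝒟_{c^{(n)}_m} both limits lim_{n→∞} A_n = lim_{n→∞} ∏_{k=0}^{n} (∏_{m=1}^{q_k} J^{(k)}_m W^{(k)}_m + J^{(k)}_{q_k}) and lim_{n→∞} B_n = lim_{n→∞} ∑_{k=0}^{n} ∑_{m=1}^{q_k} [∏_{k'=k+1}^{n} (∏_{m'=1}^{q_{k'}} J^{(k')}_{m'} W^{(k')}_{m'} + J^{(k')}_{q_{k'}})] (∏_{m'=m+1}^{q_k} J^{(k)}_{m'} W^{(k)}_{m'}) J^{(k)}_m b^{(k)}_m exist, then the sequence of neural networks (𝒩_{c,q,n})_{n=1}^∞ converges pointwise on [0,1]^{d_res}.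 -/
open Filter Matrix Topology
open scoped ENNReal

noncomputable section

/-- The ReLU activation applied componentwise. -/
def relu {d : ℕ} (x : Fin d → ℝ) : Fin d → ℝ := fun i => max (x i) 0

/-- Cast a vector along an equality of dimensions. -/
def castVec {a b : ℕ} (h : a = b) (v : Fin a → ℝ) : Fin b → ℝ := fun i => v (Fin.cast h.symm i)

/-- Cast a matrix along equalities of its dimensions. -/
def mcast {a a' b b' : ℕ} (ha : a = a') (hb : b = b') (M : Matrix (Fin a) (Fin b) ℝ) :
    Matrix (Fin a') (Fin b') ℝ :=
  M.submatrix (Fin.cast ha.symm) (Fin.cast hb.symm)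

/-- Outputs of consecutive fully connected ReLU layers:
`hiddenSeq c W b m x = (σ(W m ⬝ · + b m) ∘ ⋯ ∘ σ(W 1 ⬝ · + b 1)) x` (0-based weight indices). -/
def hiddenSeq (c : ℕ → ℕ) (W : ∀ m, Matrix (Fin (c (m+1))) (Fin (c m)) ℝ)
    (b : ∀ m, Fin (c (m+1)) → ℝ) : (m : ℕ) → (Fin (c 0) → ℝ) → Fin (c m) → ℝ
  | 0 => fun x => x
  | m+1 => fun x => relu ((W m).mulVec (hiddenSeq c W b m x) + b m)

/-- A residual block with `q` layers (`q ≥ 1`), shortcut connection added before the last ReLU. -/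
def resBlock (d q : ℕ) (hq : 0 < q) (c : ℕ → ℕ) (hc0 : c 0 = d) (hcq : c q = d)
    (W : ∀ m, Matrix (Fin (c (m+1))) (Fin (c m)) ℝ)
    (b : ∀ m, Fin (c (m+1)) → ℝ) (x : Fin d → ℝ) : Fin d → ℝ :=
  castVec (show c (q-1+1) = d from (congrArg c (Nat.succ_pred_eq_of_pos hq)).trans hcq)
    (relu ((W (q-1)).mulVec (hiddenSeq c W b (q-1) (castVec hc0.symm x))
      + castVec (show c (q-1+1) = d from
          (congrArg c (Nat.succ_pred_eq_of_pos hq)).trans hcq).symm x + b (q-1)))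

/-- The deep network with shortcut connections: composition of residual blocks `0,…,n`. -/
def resNet (d : ℕ) (q : ℕ → ℕ) (hq : ∀ n, 0 < q n) (c : ℕ → ℕ → ℕ)
    (hc0 : ∀ n, c n 0 = d) (hcq : ∀ n, c n (q n) = d)
    (W : ∀ n m, Matrix (Fin (c n (m+1))) (Fin (c n m)) ℝ)
    (b : ∀ n m, Fin (c n (m+1)) → ℝ) :
    ℕ → (Fin d → ℝ) → Fin d → ℝ
  | 0 => resBlock d (q 0) (hq 0) (c 0) (hc0 0) (hcq 0) (W 0) (b 0)
  | n+1 => fun x => resBlock d (q (n+1)) (hq (n+1)) (c (n+1)) (hc0 (n+1)) (hcq (n+1))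
      (W (n+1)) (b (n+1)) (resNet d q hq c hc0 hcq W b n x)

/-- `J` is a 0/1 diagonal (activation) matrix. -/
def IsActivation {a : ℕ} (J : Matrix (Fin a) (Fin a) ℝ) : Prop :=
  (∀ i, J i i = 0 ∨ J i i = 1) ∧ ∀ i j, i ≠ j → J i j = 0

/-- The pre-activation vector `z` has exactly the sign pattern prescribed by the
activation matrix `J`: positive on the support of `J` and `≤ 0` off it. -/
def inPattern {a : ℕ} (J : Matrix (Fin a) (Fin a) ℝ) (z : Fin a → ℝ) : Prop :=
  ∀ i, J i i = 1 ↔ 0 < z i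

/-- `x` lies in the activation domain of a single residual block w.r.t. `J`. -/
def blockDomain (d q : ℕ) (hq : 0 < q) (c : ℕ → ℕ) (hc0 : c 0 = d) (hcq : c q = d)
    (W : ∀ m, Matrix (Fin (c (m+1))) (Fin (c m)) ℝ)
    (b : ∀ m, Fin (c (m+1)) → ℝ)
    (J : ∀ m, Matrix (Fin (c (m+1))) (Fin (c (m+1))) ℝ) (x : Fin d → ℝ) : Prop :=
  (∀ m, m + 1 < q →
    inPattern (J m) ((W m).mulVec (hiddenSeq c W b m (castVec hc0.symm x)) + b m)) ∧
  inPattern (J (q-1)) ((W (q-1)).mulVec (hiddenSeq c W b (q-1) (castVec hc0.symm x))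
    + castVec (show c (q-1+1) = d from
        (congrArg c (Nat.succ_pred_eq_of_pos hq)).trans hcq).symm x + b (q-1))

/-- The input fed to block `k` (output of the previous blocks; the input itself when `k = 0`). -/
def netInput (d : ℕ) (q : ℕ → ℕ) (hq : ∀ n, 0 < q n) (c : ℕ → ℕ → ℕ)
    (hc0 : ∀ n, c n 0 = d) (hcq : ∀ n, c n (q n) = d)
    (W : ∀ n m, Matrix (Fin (c n (m+1))) (Fin (c n m)) ℝ)
    (b : ∀ n m, Fin (c n (m+1)) → ℝ) :
    ℕ → (Fin d → ℝ) → Fin d → ℝ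
  | 0 => fun x => x
  | k+1 => resNet d q hq c hc0 hcq W b k

/-- Activation domain of the multi-residual-block network `𝒩_{c,q,n}` w.r.t. `J`:
`x ∈ [0,1]^d` and at each layer of each block the pre-activation has the pattern of `J`. -/
def InActDomain (d : ℕ) (q : ℕ → ℕ) (hq : ∀ n, 0 < q n) (c : ℕ → ℕ → ℕ)
    (hc0 : ∀ n, c n 0 = d) (hcq : ∀ n, c n (q n) = d)
    (W : ∀ n m, Matrix (Fin (c n (m+1))) (Fin (c n m)) ℝ)
    (b : ∀ n m, Fin (c n (m+1)) → ℝ)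
    (J : ∀ n m, Matrix (Fin (c n (m+1))) (Fin (c n (m+1))) ℝ)
    (n : ℕ) (x : Fin d → ℝ) : Prop :=
  (∀ i, x i ∈ Set.Icc (0:ℝ) 1) ∧
  ∀ k ≤ n, blockDomain d (q k) (hq k) (c k) (hc0 k) (hcq k) (W k) (b k) (J k)
    (netInput d q hq c hc0 hcq W b k x)

/-- `prodSeg f a n = f n * f (n-1) * ⋯ * f a` (the identity when `n < a`). -/
def prodSeg {α : Type*} [Monoid α] (f : ℕ → α) (a n : ℕ) : α :=
  ((List.range' a (n + 1 - a)).reverse.map f).prod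

/-- `innerProdFrom c W J a m = (J (a+m) W (a+m)) ⋯ (J (a+1) W (a+1)) (J a W a)`,
i.e. the product `∏_{m'=a+1}^{a+m} J_{m'} W_{m'}` in the 1-based indexing of the paper. -/
def innerProdFrom (c : ℕ → ℕ) (W : ∀ m, Matrix (Fin (c (m+1))) (Fin (c m)) ℝ)
    (J : ∀ m, Matrix (Fin (c (m+1))) (Fin (c (m+1))) ℝ) (a : ℕ) :
    (m : ℕ) → Matrix (Fin (c (a + m))) (Fin (c a)) ℝ
  | 0 => (1 : Matrix (Fin (c a)) (Fin (c a)) ℝ)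
  | m+1 => (J (a + m) * W (a + m)) * innerProdFrom c W J a m

/-- The matrix `∏_{m=1}^{q} J_m W_m + J_q` of a residual block. -/
def blockMat (d q : ℕ) (hq : 0 < q) (c : ℕ → ℕ) (hc0 : c 0 = d) (hcq : c q = d)
    (W : ∀ m, Matrix (Fin (c (m+1))) (Fin (c m)) ℝ)
    (J : ∀ m, Matrix (Fin (c (m+1))) (Fin (c (m+1))) ℝ) :
    Matrix (Fin d) (Fin d) ℝ :=
  mcast ((congrArg c (Nat.zero_add q)).trans hcq) hc0 (innerProdFrom c W J 0 q)
    + mcast (show c (q-1+1) = d from (congrArg c (Nat.succ_pred_eq_of_pos hq)).trans hcq)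
        (show c (q-1+1) = d from (congrArg c (Nat.succ_pred_eq_of_pos hq)).trans hcq) (J (q-1))

/-- `Aseq n = ∏_{k=0}^{n} (∏_{m=1}^{q_k} J^{(k)}_m W^{(k)}_m + J^{(k)}_{q_k})`. -/
def Aseq (d : ℕ) (q : ℕ → ℕ) (hq : ∀ n, 0 < q n) (c : ℕ → ℕ → ℕ)
    (hc0 : ∀ n, c n 0 = d) (hcq : ∀ n, c n (q n) = d)
    (W : ∀ n m, Matrix (Fin (c n (m+1))) (Fin (c n m)) ℝ)
    (J : ∀ n m, Matrix (Fin (c n (m+1))) (Fin (c n (m+1))) ℝ) (n : ℕ) :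
    Matrix (Fin d) (Fin d) ℝ :=
  prodSeg (fun k => blockMat d (q k) (hq k) (c k) (hc0 k) (hcq k) (W k) (J k)) 0 n

/-- `∑_{m=1}^{q} (∏_{m'=m+1}^{q} J_{m'} W_{m'}) J_m b_m` for one residual block. -/
def blockBias (d q : ℕ) (c : ℕ → ℕ) (hcq : c q = d)
    (W : ∀ m, Matrix (Fin (c (m+1))) (Fin (c m)) ℝ)
    (b : ∀ m, Fin (c (m+1)) → ℝ)
    (J : ∀ m, Matrix (Fin (c (m+1))) (Fin (c (m+1))) ℝ) : Fin d → ℝ :=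
  ∑ m ∈ (Finset.range q).attach,
    (mcast ((congrArg c (Nat.add_sub_cancel' (Finset.mem_range.mp m.2))).trans hcq) rfl
        (innerProdFrom c W J (m.1+1) (q - (m.1+1)))).mulVec ((J m.1).mulVec (b m.1))

/-- `Bseq n = ∑_{k=0}^{n} ∑_{m=1}^{q_k} [∏_{k'=k+1}^{n} (∏_{m'} J W + J)] (∏_{m'>m} J W) J_m b_m`. -/
def Bseq (d : ℕ) (q : ℕ → ℕ) (hq : ∀ n, 0 < q n) (c : ℕ → ℕ → ℕ)
    (hc0 : ∀ n, c n 0 = d) (hcq : ∀ n, c n (q n) = d)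
    (W : ∀ n m, Matrix (Fin (c n (m+1))) (Fin (c n m)) ℝ)
    (b : ∀ n m, Fin (c n (m+1)) → ℝ)
    (J : ∀ n m, Matrix (Fin (c n (m+1))) (Fin (c n (m+1))) ℝ) (n : ℕ) : Fin d → ℝ :=
  ∑ k ∈ Finset.range (n+1),
    (prodSeg (fun k' => blockMat d (q k') (hq k') (c k') (hc0 k') (hcq k') (W k') (J k'))
        (k+1) n).mulVec
      (blockBias d (q k) (c k) (hcq k) (W k) (b k) (J k))

/-- A family of norms on the spaces `ℝ^m` which is monotone in the sense of the paper. -/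
structure NormFamily where
  N : ∀ m : ℕ, (Fin m → ℝ) → ℝ
  eq_zero_iff : ∀ (m : ℕ) (x : Fin m → ℝ), N m x = 0 ↔ x = 0
  add_le : ∀ (m : ℕ) (x y : Fin m → ℝ), N m (x + y) ≤ N m x + N m y
  smul_eq : ∀ (m : ℕ) (r : ℝ) (x : Fin m → ℝ), N m (r • x) = |r| * N m x
  mono : ∀ (m : ℕ) (x y : Fin m → ℝ), (∀ i, |x i| ≤ |y i|) → N m x ≤ N m y

/-- The operator (matrix) norm induced by a family of vector norms. -/
def NormFamily.op (F : NormFamily) {a b : ℕ} (M : Matrix (Fin a) (Fin b) ℝ) : ℝ :=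
  sSup ((fun x => F.N a (M.mulVec x) / F.N b x) '' {x : Fin b → ℝ | x ≠ 0})

/-- 1-D Toeplitz convolution-with-zero-padding matrix of a filter mask `u ∈ ℝ^{2f+1}`:
`(T1 f d u) a b = u (f - b + a)` when `-f ≤ b - a ≤ f` and `0` otherwise. -/
def T1 (f d : ℕ) (u : Fin (2*f+1) → ℝ) : Matrix (Fin d) (Fin d) ℝ :=
  fun a b =>
    if h : -(f:ℤ) ≤ ((b:ℕ):ℤ) - ((a:ℕ):ℤ) ∧ ((b:ℕ):ℤ) - ((a:ℕ):ℤ) ≤ (f:ℤ) then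
      u ⟨((f:ℤ) - ((b:ℕ):ℤ) + ((a:ℕ):ℤ)).toNat, by omega⟩
    else 0

/-- 2-D block Toeplitz convolution matrix of a mask `v ∈ ℝ^{(2f+1)×(2f+1)}`:
the `(a,b)` block is `T1 f d (v (f - b + a))` when `-f ≤ b - a ≤ f` and `0` otherwise. -/
def T2 (f d : ℕ) (v : Fin (2*f+1) → Fin (2*f+1) → ℝ) :
    Matrix (Fin d × Fin d) (Fin d × Fin d) ℝ :=
  fun P Q =>
    if h : -(f:ℤ) ≤ ((Q.1:ℕ):ℤ) - ((P.1:ℕ):ℤ) ∧ ((Q.1:ℕ):ℤ) - ((P.1:ℕ):ℤ) ≤ (f:ℤ) then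
      T1 f d (v ⟨((f:ℤ) - ((Q.1:ℕ):ℤ) + ((P.1:ℕ):ℤ)).toNat, by omega⟩) P.2 Q.2
    else 0

/-- The block matrix `T(w)` of a multi-channel convolution
with `cin` input channels and `cout` output channels: the `(i,j)` block is `T2 f d (w i j)`. -/
def Tmulti (f d cin cout : ℕ)
    (w : Fin cout → Fin cin → Fin (2*f+1) → Fin (2*f+1) → ℝ) :
    Matrix (Fin cout × Fin d × Fin d) (Fin cin × Fin d × Fin d) ℝ :=
  fun P Q => T2 f d (w P.1 Q.1) P.2 Q.2

/-- Multi-channel 2-D convolution with zero padding, as matrix-vector multiplication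
by the Toeplitz-type matrices `T2`. -/
def convLayer (f d cin cout : ℕ)
    (w : Fin cout → Fin cin → Fin (2*f+1) → Fin (2*f+1) → ℝ)
    (x : Fin cin → Fin d → Fin d → ℝ) : Fin cout → Fin d → Fin d → ℝ :=
  fun i a b => ∑ j, ∑ s, ∑ t, T2 f d (w i j) (a, b) (s, t) * x j s t

/-- Cast the channel index of a tensor along an equality of channel numbers. -/
def castChan {d a b : ℕ} (h : a = b) (x : Fin a → Fin d → Fin d → ℝ) :
    Fin b → Fin d → Fin d → ℝ :=
  fun i => x (Fin.cast h.symm i)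

/-- Hidden layers of a convolutional residual block (with constant-per-channel biases `β`). -/
def convHidden (d : ℕ) (c : ℕ → ℕ) (f : ℕ → ℕ)
    (w : ∀ m, Fin (c (m+1)) → Fin (c m) → Fin (2 * f m + 1) → Fin (2 * f m + 1) → ℝ)
    (β : ∀ m, Fin (c (m+1)) → ℝ) :
    (m : ℕ) → (Fin (c 0) → Fin d → Fin d → ℝ) → Fin (c m) → Fin d → Fin d → ℝ
  | 0 => fun x => x
  | m+1 => fun x i a b =>
      max (convLayer (f m) d (c m) (c (m+1)) (w m) (convHidden d c f w β m x) i a b + β m i) 0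

/-- A convolutional residual block with `Q ≥ 1` convolutional layers and a shortcut connection. -/
def convBlock (d Q : ℕ) (hQ : 0 < Q) (cres : ℕ) (c : ℕ → ℕ)
    (hc0 : c 0 = cres) (hcq : c Q = cres) (f : ℕ → ℕ)
    (w : ∀ m, Fin (c (m+1)) → Fin (c m) → Fin (2 * f m + 1) → Fin (2 * f m + 1) → ℝ)
    (β : ∀ m, Fin (c (m+1)) → ℝ)
    (x : Fin cres → Fin d → Fin d → ℝ) : Fin cres → Fin d → Fin d → ℝ :=
  castChan (show c (Q-1+1) = cres from (congrArg c (Nat.succ_pred_eq_of_pos hQ)).trans hcq)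
    (fun i a b =>
      max (convLayer (f (Q-1)) d (c (Q-1)) (c (Q-1+1)) (w (Q-1))
            (convHidden d c f w β (Q-1) (castChan hc0.symm x)) i a b
          + x (Fin.cast (show c (Q-1+1) = cres from
              (congrArg c (Nat.succ_pred_eq_of_pos hQ)).trans hcq) i) a b
          + β (Q-1) i) 0)

/-- The deep convolutional ResNet without the output layer: sampling layer
`σ(x ∗ w_s + b_s)` (block `0`) followed by the convolutional residual blocks `1,…,n`. -/
def convNet (d cin cres : ℕ) (q : ℕ → ℕ) (hq : ∀ n, 0 < q n)
    (c : ℕ → ℕ → ℕ) (hc00 : c 0 0 = cin) (h01 : c 0 1 = cres)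
    (hc0 : ∀ n, 0 < n → c n 0 = cres) (hcq : ∀ n, 0 < n → c n (q n) = cres)
    (f : ℕ → ℕ → ℕ)
    (w : ∀ n m, Fin (c n (m+1)) → Fin (c n m) → Fin (2 * f n m + 1) → Fin (2 * f n m + 1) → ℝ)
    (β : ∀ n m, Fin (c n (m+1)) → ℝ) :
    ℕ → (Fin cin → Fin d → Fin d → ℝ) → Fin cres → Fin d → Fin d → ℝ
  | 0 => fun x => castChan h01 (fun i a b =>
      max (convLayer (f 0 0) d (c 0 0) (c 0 1) (w 0 0) (castChan hc00.symm x) i a b + β 0 0 i) 0)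
  | n+1 => fun x =>
      convBlock d (q (n+1)) (hq (n+1)) cres (c (n+1)) (hc0 (n+1) (Nat.succ_pos n))
        (hcq (n+1) (Nat.succ_pos n)) (f (n+1)) (w (n+1)) (β (n+1))
        (convNet d cin cres q hq c hc00 h01 hc0 hcq f w β n x)

/-- The ℓ_p norm of a vector, `p ∈ [1,∞]`. -/
def lpNorm (p : ℝ≥0∞) {ι : Type*} [Fintype ι] (x : ι → ℝ) : ℝ :=
  if p = ∞ then ⨆ i, |x i| else (∑ i, |x i| ^ p.toReal) ^ (1 / p.toReal)

/-- The matrix (operator) norm induced by the ℓ_p vector norms. -/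
def opNormP (p : ℝ≥0∞) {α β : Type*} [Fintype α] [Fintype β] (M : Matrix α β ℝ) : ℝ :=
  sSup ((fun x => lpNorm p (M.mulVec x) / lpNorm p x) '' {x : β → ℝ | x ≠ 0})

/-- Maximum absolute column sum of a matrix (the operator norm induced by ℓ₁). -/
def maxColSum {α β : Type*} [Fintype α] [Fintype β] (M : Matrix α β ℝ) : ℝ :=
  ⨆ j, ∑ i, |M i j|

/-- Maximum absolute row sum of a matrix (the operator norm induced by ℓ_∞). -/
def maxRowSum {α β : Type*} [Fintype α] [Fintype β] (M : Matrix α β ℝ) : ℝ :=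
  ⨆ i, ∑ j, |M i j|

/-- The block matrix with blocks `A i j ∈ ℝ^{r×c}`, `i < N`, `j < M`. -/
def blockMatrixOf {N M r c : ℕ} (A : Fin N → Fin M → Matrix (Fin r) (Fin c) ℝ) :
    Matrix (Fin N × Fin r) (Fin M × Fin c) ℝ :=
  fun p q => A p.1 q.1 p.2 q.2

/-- The factor `N^{(n)}_m` of Theorem 5.2: the bound of Lemma 5.1 on `‖T(w)‖_p`. -/
def Nfactor (p : ℝ≥0∞) {f cin cout : ℕ}
    (w : Fin cout → Fin cin → Fin (2*f+1) → Fin (2*f+1) → ℝ) : ℝ :=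
  (⨆ j : Fin cin, ∑ i, ∑ i', ∑ j', |w i j i' j'|) ^ ((1/p).toReal)
    * (⨆ i : Fin cout, ∑ j, ∑ i', ∑ j', |w i j i' j'|) ^ (1 - (1/p).toReal)

/-- Zero padding of a vector `x ∈ ℝ^{din}` to a vector `(x, 0) ∈ ℝ^{d}`. -/
def padVec (din d : ℕ) (x : Fin din → ℝ) : Fin d → ℝ :=
  fun i => if h : (i : ℕ) < din then x ⟨i, h⟩ else 0

/-- The matrix `[Ws  0] ∈ ℝ^{d × d}` obtained by padding `Ws ∈ ℝ^{d × din}` with zero columns. -/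
def padMat (din d : ℕ) (Ws : Matrix (Fin d) (Fin din) ℝ) : Matrix (Fin d) (Fin d) ℝ :=
  fun i j => if h : (j : ℕ) < din then Ws i ⟨j, h⟩ else 0

/-!
On the set of inputs where every ReLU of a residual block is in a fixed on/off pattern `J`, the
ReLUs act as the 0/1 diagonal matrices `J`, so the block is the affine map `x ↦ M x + β` given by
its block matrix and block bias; composing blocks, `𝒩_{c,q,n}(x) = A_n x + B_n`. An input `x`
fixes such a pattern along its own trajectory through all blocks, so along the whole sequence the
outputs at `x` are `A_n x + B_n` for one choice of `J`, and they converge by hypothesis.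
-/

lemma castVec_add {a b : ℕ} (h : a = b) (u v : Fin a → ℝ) :
    castVec h (u + v) = castVec h u + castVec h v := rfl

lemma castVec_sum {a b : ℕ} (h : a = b) {ι : Type*} (s : Finset ι) (f : ι → Fin a → ℝ) :
    castVec h (∑ j ∈ s, f j) = ∑ j ∈ s, castVec h (f j) := by
  funext i
  simp [castVec, Finset.sum_apply]

lemma mcast_mulVec {a a' b b' : ℕ} (ha : a = a') (hb : b = b') (M : Matrix (Fin a) (Fin b) ℝ)
    (v : Fin b' → ℝ) : mcast ha hb M *ᵥ v = castVec ha (M *ᵥ castVec hb.symm v) := by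
  subst ha hb
  rfl

lemma mulVec_castVec_congr {c : ℕ → ℕ} (M : ∀ k, Matrix (Fin (c (k+1))) (Fin (c k)) ℝ)
    {k k' : ℕ} (h : k = k') (u : Fin (c k) → ℝ) :
    M k' *ᵥ castVec (congrArg c h) u = castVec (congrArg (fun k => c (k+1)) h) (M k *ᵥ u) := by
  subst h
  rfl

section Activation

variable {a : ℕ}

def actPattern (z : Fin a → ℝ) : Matrix (Fin a) (Fin a) ℝ :=
  diagonal fun i => if 0 < z i then 1 else 0

lemma isActivation_actPattern (z : Fin a → ℝ) : IsActivation (actPattern z) := by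
  refine ⟨fun i => ?_, fun i j hij => diagonal_apply_ne _ hij⟩
  by_cases h : 0 < z i <;> simp [actPattern, h]

lemma inPattern_actPattern (z : Fin a → ℝ) : inPattern (actPattern z) z := by
  intro i
  by_cases h : 0 < z i <;> simp [actPattern, h]

lemma relu_eq_mulVec {J : Matrix (Fin a) (Fin a) ℝ} (hJ : IsActivation J) {z : Fin a → ℝ}
    (hz : inPattern J z) : relu z = J *ᵥ z := by
  funext i
  have hdiag : (J *ᵥ z) i = J i i * z i :=
    Fintype.sum_eq_single (f := fun j => J i j * z j) i
      fun j hji => by rw [hJ.2 i j (Ne.symm hji), zero_mul]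
  rw [hdiag]
  rcases hJ.1 i with h0 | h1
  · have hz0 : z i ≤ 0 := not_lt.mp fun hpos => by simp [(hz i).mpr hpos] at h0
    simp [relu, h0, hz0]
  · simp [relu, h1, ((hz i).mp h1).le]

end Activation

section Block

variable (c : ℕ → ℕ) (W : ∀ m, Matrix (Fin (c (m+1))) (Fin (c m)) ℝ)
  (b : ∀ m, Fin (c (m+1)) → ℝ) (J : ∀ m, Matrix (Fin (c (m+1))) (Fin (c (m+1))) ℝ)

lemma innerProdFrom_mulVec_congr (a : ℕ) {m m' : ℕ} (h : m = m') (x : Fin (c a) → ℝ) :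
    innerProdFrom c W J a m' *ᵥ x
      = castVec (congrArg (fun m => c (a + m)) h) (innerProdFrom c W J a m *ᵥ x) := by
  subst h
  rfl

/-- The contribution `(∏_{m'=j+2}^{m} J_{m'} W_{m'}) J_{j+1} b_{j+1}` (1-based) of the bias of
layer `j` to the output of layer `m`; zero when `m ≤ j`. -/
def hiddenBias (m j : ℕ) : Fin (c m) → ℝ :=
  if h : j < m then
    castVec (congrArg c (Nat.add_sub_cancel' h))
      (innerProdFrom c W J (j+1) (m-(j+1)) *ᵥ (J j *ᵥ b j))
  else 0

def hiddenAffine (m : ℕ) (v : Fin (c 0) → ℝ) : Fin (c m) → ℝ :=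
  castVec (congrArg c (Nat.zero_add m)) (innerProdFrom c W J 0 m *ᵥ v)
    + ∑ j ∈ Finset.range m, hiddenBias c W b J m j

lemma mulVec_hiddenBias {m j : ℕ} (hj : j < m) :
    (J m * W m) *ᵥ hiddenBias c W b J m j = hiddenBias c W b J (m+1) j := by
  rw [hiddenBias, hiddenBias, dif_pos hj, dif_pos (Nat.lt_succ_of_lt hj),
    mulVec_castVec_congr (fun k => J k * W k) (Nat.add_sub_cancel' hj), mulVec_mulVec,
    innerProdFrom_mulVec_congr c W J (j+1) (show m - (j+1) + 1 = m + 1 - (j+1) by omega)]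
  rfl

lemma hiddenBias_succ_self (m : ℕ) : hiddenBias c W b J (m+1) m = J m *ᵥ b m := by
  rw [hiddenBias, dif_pos (Nat.lt_succ_self m),
    innerProdFrom_mulVec_congr c W J (m+1) (show 0 = m + 1 - (m+1) by omega),
    show innerProdFrom c W J (m+1) 0 = 1 from rfl, one_mulVec]
  rfl

lemma hiddenAffine_succ (m : ℕ) (v : Fin (c 0) → ℝ) :
    hiddenAffine c W b J (m+1) v
      = (J m * W m) *ᵥ hiddenAffine c W b J m v + J m *ᵥ b m := by
  have hlin :
      (J m * W m) *ᵥ castVec (congrArg c (Nat.zero_add m)) (innerProdFrom c W J 0 m *ᵥ v)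
      = castVec (congrArg c (Nat.zero_add (m+1))) (innerProdFrom c W J 0 (m+1) *ᵥ v) := by
    rw [mulVec_castVec_congr (fun k => J k * W k) (Nat.zero_add m), mulVec_mulVec]
    rfl
  rw [hiddenAffine, hiddenAffine, mulVec_add, mulVec_sum, hlin, Finset.sum_range_succ,
    hiddenBias_succ_self, Finset.sum_congr rfl fun j hj => mulVec_hiddenBias c W b J
      (Finset.mem_range.mp hj), add_assoc]

lemma hiddenSeq_eq_hiddenAffine (hJ : ∀ m, IsActivation (J m)) (v : Fin (c 0) → ℝ) (m : ℕ)
    (hpat : ∀ j < m, inPattern (J j) (W j *ᵥ hiddenSeq c W b j v + b j)) :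
    hiddenSeq c W b m v = hiddenAffine c W b J m v := by
  induction m with
  | zero =>
    simp only [hiddenAffine, Finset.range_zero, Finset.sum_empty, add_zero]
    exact (congrArg _ (one_mulVec v)).symm
  | succ m ih =>
    rw [hiddenAffine_succ, ← ih fun j hj => hpat j (Nat.lt_succ_of_lt hj), ← mulVec_mulVec,
      ← mulVec_add]
    exact relu_eq_mulVec (hJ m) (hpat m (Nat.lt_succ_self m))

variable {c W b J} {d : ℕ}

lemma blockBias_eq_sum_hiddenBias (q : ℕ) (hcq : c q = d) :
    blockBias d q c hcq W b J = ∑ j ∈ Finset.range q, castVec hcq (hiddenBias c W b J q j) := by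
  rw [blockBias, ← Finset.sum_attach (Finset.range q)]
  refine Finset.sum_congr rfl fun j _ => ?_
  rw [hiddenBias, dif_pos (Finset.mem_range.mp j.2), mcast_mulVec]
  rfl

lemma castVec_hiddenAffine (q : ℕ) (hc0 : c 0 = d) (hcq : c q = d) (x : Fin d → ℝ) :
    castVec hcq (hiddenAffine c W b J q (castVec hc0.symm x))
      = mcast ((congrArg c (Nat.zero_add q)).trans hcq) hc0 (innerProdFrom c W J 0 q) *ᵥ x
        + blockBias d q c hcq W b J := by
  rw [hiddenAffine, castVec_add, castVec_sum, blockBias_eq_sum_hiddenBias, mcast_mulVec]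
  rfl

lemma resBlock_eq_affine {q : ℕ} (hq : 0 < q) (hc0 : c 0 = d) (hcq : c q = d)
    (hJ : ∀ m, IsActivation (J m)) (x : Fin d → ℝ)
    (hdom : blockDomain d q hq c hc0 hcq W b J x) :
    resBlock d q hq c hc0 hcq W b x
      = blockMat d q hq c hc0 hcq W J *ᵥ x + blockBias d q c hcq W b J := by
  obtain ⟨q, rfl⟩ : ∃ q', q = q' + 1 := ⟨q - 1, (Nat.succ_pred_eq_of_pos hq).symm⟩
  have hhidden := hiddenSeq_eq_hiddenAffine c W b J hJ (castVec hc0.symm x) q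
    fun j hj => hdom.1 j (Nat.succ_lt_succ hj)
  have hshortcut : castVec hcq (J q *ᵥ castVec hcq.symm x)
      = mcast (congrArg c (Nat.succ_pred_eq_of_pos hq) |>.trans hcq)
          (congrArg c (Nat.succ_pred_eq_of_pos hq) |>.trans hcq) (J (q+1-1)) *ᵥ x := by
    rw [mcast_mulVec]
    rfl
  have hlast : inPattern (J q)
      (W q *ᵥ hiddenSeq c W b q (castVec hc0.symm x) + castVec hcq.symm x + b q) := hdom.2
  change castVec hcq (relu (W q *ᵥ hiddenSeq c W b q (castVec hc0.symm x)
      + castVec hcq.symm x + b q)) = _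
  rw [relu_eq_mulVec (hJ q) hlast, mulVec_add, mulVec_add, add_right_comm, mulVec_mulVec,
    hhidden, ← hiddenAffine_succ, castVec_add, castVec_hiddenAffine, hshortcut, blockMat,
    add_mulVec, add_right_comm]

end Block

lemma exists_activation_blockDomain {c : ℕ → ℕ} {d : ℕ} (q : ℕ) (hq : 0 < q)
    (hc0 : c 0 = d) (hcq : c q = d)
    (W : ∀ m, Matrix (Fin (c (m+1))) (Fin (c m)) ℝ) (b : ∀ m, Fin (c (m+1)) → ℝ)
    (x : Fin d → ℝ) :
    ∃ J : ∀ m, Matrix (Fin (c (m+1))) (Fin (c (m+1))) ℝ,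
      (∀ m, IsActivation (J m)) ∧ blockDomain d q hq c hc0 hcq W b J x := by
  let shortcut (m : ℕ) : Fin (c (m+1)) → ℝ :=
    if h : m = q - 1 then castVec (by rw [h, Nat.sub_add_cancel hq, hcq]) x else 0
  let preact (m : ℕ) := W m *ᵥ hiddenSeq c W b m (castVec hc0.symm x) + shortcut m + b m
  refine ⟨fun m => actPattern (preact m), fun m => isActivation_actPattern _,
    fun m hm => ?_, ?_⟩
  · have hshortcut : shortcut m = 0 := dif_neg (by omega)
    simpa only [preact, hshortcut, add_zero] using inPattern_actPattern (preact m)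
  · have hshortcut : shortcut (q - 1) = castVec _ x := dif_pos rfl
    simpa only [preact, hshortcut] using inPattern_actPattern (preact (q - 1))

section Net

lemma prodSeg_succ {α : Type*} [Monoid α] (f : ℕ → α) {a : ℕ} (n : ℕ) (h : a ≤ n + 1) :
    prodSeg f a (n+1) = f (n+1) * prodSeg f a n := by
  rw [prodSeg, prodSeg, show n + 1 + 1 - a = (n + 1 - a) + 1 by omega, List.range'_concat,
    show a + 1 * (n + 1 - a) = n + 1 by omega]
  simp

lemma prodSeg_succ_self {α : Type*} [Monoid α] (f : ℕ → α) (n : ℕ) :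
    prodSeg f (n+1) n = 1 := by
  simp [prodSeg]

lemma prodSeg_self {α : Type*} [Monoid α] (f : ℕ → α) (a : ℕ) : prodSeg f a a = f a := by
  simp [prodSeg]

variable {d : ℕ} {q : ℕ → ℕ} {hq : ∀ n, 0 < q n} {c : ℕ → ℕ → ℕ}
  {hc0 : ∀ n, c n 0 = d} {hcq : ∀ n, c n (q n) = d}
  {W : ∀ n m, Matrix (Fin (c n (m+1))) (Fin (c n m)) ℝ}
  {b : ∀ n m, Fin (c n (m+1)) → ℝ}
  {J : ∀ n m, Matrix (Fin (c n (m+1))) (Fin (c n (m+1))) ℝ}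

lemma Aseq_zero :
    Aseq d q hq c hc0 hcq W J 0 = blockMat d (q 0) (hq 0) (c 0) (hc0 0) (hcq 0) (W 0) (J 0) :=
  prodSeg_self _ 0

lemma Aseq_succ (n : ℕ) :
    Aseq d q hq c hc0 hcq W J (n+1)
      = blockMat d (q (n+1)) (hq (n+1)) (c (n+1)) (hc0 (n+1)) (hcq (n+1)) (W (n+1)) (J (n+1))
        * Aseq d q hq c hc0 hcq W J n :=
  prodSeg_succ _ n (Nat.zero_le _)

lemma Bseq_zero :
    Bseq d q hq c hc0 hcq W b J 0 = blockBias d (q 0) (c 0) (hcq 0) (W 0) (b 0) (J 0) := by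
  simp [Bseq, prodSeg_succ_self]

lemma Bseq_succ (n : ℕ) :
    Bseq d q hq c hc0 hcq W b J (n+1)
      = blockMat d (q (n+1)) (hq (n+1)) (c (n+1)) (hc0 (n+1)) (hcq (n+1)) (W (n+1)) (J (n+1))
          *ᵥ Bseq d q hq c hc0 hcq W b J n
        + blockBias d (q (n+1)) (c (n+1)) (hcq (n+1)) (W (n+1)) (b (n+1)) (J (n+1)) := by
  rw [Bseq, Finset.sum_range_succ, prodSeg_succ_self, one_mulVec, Bseq, mulVec_sum]
  congr 1
  refine Finset.sum_congr rfl fun k hk => ?_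
  rw [prodSeg_succ _ n (by have := Finset.mem_range.mp hk; omega), ← mulVec_mulVec]

lemma resNet_eq_affine (hJ : ∀ k m, IsActivation (J k m)) (x : Fin d → ℝ)
    (hdom : ∀ k, blockDomain d (q k) (hq k) (c k) (hc0 k) (hcq k) (W k) (b k) (J k)
      (netInput d q hq c hc0 hcq W b k x)) (n : ℕ) :
    resNet d q hq c hc0 hcq W b n x
      = Aseq d q hq c hc0 hcq W J n *ᵥ x + Bseq d q hq c hc0 hcq W b J n := by
  induction n with
  | zero => rw [Aseq_zero, Bseq_zero]; exact resBlock_eq_affine _ _ _ (hJ 0) x (hdom 0)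
  | succ n ih =>
    refine (resBlock_eq_affine _ _ _ (hJ (n+1)) (resNet d q hq c hc0 hcq W b n x)
      (hdom (n+1))).trans ?_
    rw [ih, Aseq_succ, Bseq_succ, mulVec_add, mulVec_mulVec, add_assoc]

end Net

theorem stmt1_general
    (d : ℕ)
    (q : ℕ → ℕ) (hq : ∀ k, 0 < q k)
    (c : ℕ → ℕ → ℕ)
    (hc0 : ∀ k, c k 0 = d) (hcq : ∀ k, c k (q k) = d)
    (W : ∀ k m, Matrix (Fin (c k (m+1))) (Fin (c k m)) ℝ)
    (b : ∀ k m, Fin (c k (m+1)) → ℝ)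
    (hlim : ∀ J : ∀ k m, Matrix (Fin (c k (m+1))) (Fin (c k (m+1))) ℝ,
      (∀ k m, IsActivation (J k m)) →
        (∃ A, Tendsto (fun n => Aseq d q hq c hc0 hcq W J n) atTop (nhds A)) ∧
        (∃ B, Tendsto (fun n => Bseq d q hq c hc0 hcq W b J n) atTop (nhds B))) :
    ∀ x : Fin d → ℝ, (∀ i, x i ∈ Set.Icc (0:ℝ) 1) →
      ∃ y, Tendsto (fun n => resNet d q hq c hc0 hcq W b n x) atTop (nhds y) := by
  intro x _
  choose J hJ hdom using fun k => exists_activation_blockDomain (q k) (hq k) (hc0 k) (hcq k)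
    (W k) (b k) (netInput d q hq c hc0 hcq W b k x)
  obtain ⟨⟨A, hA⟩, ⟨B, hB⟩⟩ := hlim J hJ
  have hAx : Tendsto (fun n => Aseq d q hq c hc0 hcq W J n *ᵥ x) atTop (𝓝 (A *ᵥ x)) :=
    ((continuous_id.matrix_mulVec continuous_const).tendsto A).comp hA
  exact ⟨A *ᵥ x + B, (hAx.add hB).congr fun n => (resNet_eq_affine hJ x hdom n).symm⟩

theorem stmt1
    (d : ℕ) (hd : 0 < d)
    (q : ℕ → ℕ) (hq : ∀ k, 0 < q k)
    (c : ℕ → ℕ → ℕ) (hcpos : ∀ k m, m ≤ q k → 0 < c k m)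
    (hc0 : ∀ k, c k 0 = d) (hcq : ∀ k, c k (q k) = d)
    (W : ∀ k m, Matrix (Fin (c k (m+1))) (Fin (c k m)) ℝ)
    (b : ∀ k m, Fin (c k (m+1)) → ℝ)
    (hlim : ∀ J : ∀ k m, Matrix (Fin (c k (m+1))) (Fin (c k (m+1))) ℝ,
      (∀ k m, IsActivation (J k m)) →
        (∃ A, Tendsto (fun n => Aseq d q hq c hc0 hcq W J n) atTop (nhds A)) ∧
        (∃ B, Tendsto (fun n => Bseq d q hq c hc0 hcq W b J n) atTop (nhds B))) :
    ∀ x : Fin d → ℝ, (∀ i, x i ∈ Set.Icc (0:ℝ) 1) →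
      ∃ y, Tendsto (fun n => resNet d q hq c hc0 hcq W b n x) atTop (nhds y) :=
  stmt1_general d q hq c hc0 hcq W b hlim

end
end

section
/- Let q = (q_n)_{n=0}^∞ be a bounded sequence of positive integers, let c^{(n)} = (c^{(n)}_0,…,c^{(n)}_{q_n}) be positive integers with c^{(n)}_0 = c^{(n)}_{q_n} = d_res for all n, and let W^{(n)}_m ∈ ℝ^{c^{(n)}_m × c^{(n)}_{m−1}} for 1 ≤ m ≤ q_n. If ∑_{n=0}^∞ ∏_{m=1}^{q_n} ‖W^{(n)}_m‖ < +∞, then for every choice of activation matrices J^{(n)}_m ∈ 𝒟_{c^{(n)}_m} the infinite product lim_{n→∞} ∏_{k=0}^{n} (∏_{m=1}^{q_k} J^{(k)}_m W^{(k)}_m + J^{(k)}_{q_k}) converges in ℝ^{d_res × d_res}. -/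
open Filter Matrix Topology
open scoped ENNReal

noncomputable section

/-!
Write the `k`-th block as `P k + E k`, where `P k = ∏ J W` has `F.op (P k) ≤ ∏ F.op (W k m)` and
`E k` is a 0/1 diagonal matrix. Splitting the product `G t = ∏_{k<t} (P k + E k)` at `K ≤ t` gives
`G t = (E (t-1) ⋯ E K) G K + ∑_{K ≤ k < t} (E (t-1) ⋯ E (k+1)) P k G k`.
In a submultiplicative norm with `‖E k‖ ≤ 1` the partial products are bounded by `exp ∑ ‖P k‖`,
so the sum is at most a constant times the tail `∑_{k ≥ K} ‖P k‖`; the products `E (t-1) ⋯ E K`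
are diagonal with entries in `[0, 1]` that decrease in `t`, hence converge. Thus `G` is uniformly
close to Cauchy sequences and is itself Cauchy. The widths of the layers are unbounded, so the
weights are only ever measured by the submultiplicative `F.op`; the `d × d` products live in the
Banach algebra given by the `ℓ∞` operator norm, which is dominated by a multiple of `F.op`.
-/

namespace NormFamily

variable (F : NormFamily)

lemma N_zero (m : ℕ) : F.N m 0 = 0 := (F.eq_zero_iff m 0).mpr rfl

lemma N_nonneg (m : ℕ) (x : Fin m → ℝ) : 0 ≤ F.N m x := by
  have h := F.add_le m x (-x)
  rw [add_neg_cancel, F.N_zero, ← neg_one_smul ℝ x, F.smul_eq] at h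
  norm_num at h
  linarith

lemma N_pos {m : ℕ} {x : Fin m → ℝ} (hx : x ≠ 0) : 0 < F.N m x :=
  (F.N_nonneg m x).lt_of_ne fun h => hx ((F.eq_zero_iff m x).mp h.symm)

lemma N_single_pos {m : ℕ} (j : Fin m) : 0 < F.N m (Pi.single j 1) :=
  F.N_pos fun h => by simpa using congrFun h j

lemma abs_mul_N_single_le {m : ℕ} (x : Fin m → ℝ) (j : Fin m) :
    |x j| * F.N m (Pi.single j 1) ≤ F.N m x := by
  rw [← F.smul_eq]
  refine F.mono m _ _ fun i => ?_
  by_cases h : i = j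
  · subst h; simp
  · simp [h]

lemma N_mulVec_le_sum {a b : ℕ} (M : Matrix (Fin a) (Fin b) ℝ) (x : Fin b → ℝ) :
    F.N a (M *ᵥ x) ≤ (∑ j, F.N a (fun i => M i j) / F.N b (Pi.single j 1)) * F.N b x := by
  have hcols : M *ᵥ x = ∑ j, x j • fun i => M i j := by
    ext i
    simp [Matrix.mulVec, dotProduct, mul_comm]
  rw [hcols, Finset.sum_mul]
  refine (Finset.le_sum_of_subadditive _ (F.N_zero a).le (F.add_le a) _ _).trans
    (Finset.sum_le_sum fun j _ => ?_)
  rw [F.smul_eq, div_mul_eq_mul_div, le_div_iff₀ (F.N_single_pos j)]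
  calc |x j| * F.N a (fun i => M i j) * F.N b (Pi.single j 1)
      = F.N a (fun i => M i j) * (|x j| * F.N b (Pi.single j 1)) := by ring
    _ ≤ F.N a (fun i => M i j) * F.N b x :=
        mul_le_mul_of_nonneg_left (F.abs_mul_N_single_le x j) (F.N_nonneg a _)

lemma op_nonneg {a b : ℕ} (M : Matrix (Fin a) (Fin b) ℝ) : 0 ≤ F.op M :=
  Real.sSup_nonneg <| by
    rintro r ⟨x, -, rfl⟩
    exact div_nonneg (F.N_nonneg _ _) (F.N_nonneg _ _)

lemma N_mulVec_le {a b : ℕ} (M : Matrix (Fin a) (Fin b) ℝ) (x : Fin b → ℝ) :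
    F.N a (M *ᵥ x) ≤ F.op M * F.N b x := by
  rcases eq_or_ne x 0 with rfl | hx
  · simp [F.N_zero]
  have hbdd : BddAbove ((fun x => F.N a (M *ᵥ x) / F.N b x) '' {x | x ≠ 0}) := by
    refine ⟨∑ j, F.N a (fun i => M i j) / F.N b (Pi.single j 1), ?_⟩
    rintro r ⟨y, hy, rfl⟩
    exact (div_le_iff₀ (F.N_pos hy)).mpr (F.N_mulVec_le_sum M y)
  exact (div_le_iff₀ (F.N_pos hx)).mp (le_csSup hbdd ⟨x, hx, rfl⟩)

lemma op_le {a b : ℕ} {M : Matrix (Fin a) (Fin b) ℝ} {C : ℝ} (hC : 0 ≤ C)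
    (h : ∀ x, F.N a (M *ᵥ x) ≤ C * F.N b x) : F.op M ≤ C :=
  Real.sSup_le (by
    rintro r ⟨x, hx, rfl⟩
    exact (div_le_iff₀ (F.N_pos hx)).mpr (h x)) hC

lemma op_mul_le {a b c : ℕ} (A : Matrix (Fin a) (Fin b) ℝ) (B : Matrix (Fin b) (Fin c) ℝ) :
    F.op (A * B) ≤ F.op A * F.op B := by
  refine F.op_le (mul_nonneg (F.op_nonneg A) (F.op_nonneg B)) fun x => ?_
  rw [← Matrix.mulVec_mulVec, mul_assoc]
  exact (F.N_mulVec_le A _).trans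
    (mul_le_mul_of_nonneg_left (F.N_mulVec_le B x) (F.op_nonneg A))

lemma op_one_le (a : ℕ) : F.op (1 : Matrix (Fin a) (Fin a) ℝ) ≤ 1 :=
  F.op_le zero_le_one fun x => by simp

lemma op_mcast {a a' b b' : ℕ} (ha : a = a') (hb : b = b') (M : Matrix (Fin a) (Fin b) ℝ) :
    F.op (mcast ha hb M) = F.op M := by
  subst ha hb
  rfl

lemma abs_apply_mul_N_single_le {a b : ℕ} (M : Matrix (Fin a) (Fin b) ℝ) (i : Fin a) (j : Fin b) :
    |M i j| * F.N a (Pi.single i 1) ≤ F.op M * F.N b (Pi.single j 1) := by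
  have hcol : M *ᵥ Pi.single j 1 = fun i' => M i' j := by
    ext i'
    simp [Matrix.mulVec_single]
  simpa [hcol] using (F.abs_mul_N_single_le (M *ᵥ Pi.single j 1) i).trans (F.N_mulVec_le M _)

end NormFamily

lemma IsActivation.mcast {a a' : ℕ} {J : Matrix (Fin a) (Fin a) ℝ} (hJ : IsActivation J)
    (h : a = a') : IsActivation (mcast h h J) := by
  subst h
  exact hJ

lemma IsActivation.eq_diagonal {a : ℕ} {J : Matrix (Fin a) (Fin a) ℝ} (hJ : IsActivation J) :
    J = Matrix.diagonal fun i => J i i := by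
  ext i j
  by_cases hij : i = j
  · subst hij; simp
  · rw [hJ.2 i j hij, Matrix.diagonal_apply_ne _ hij]

lemma IsActivation.apply_mem_Icc {a : ℕ} {J : Matrix (Fin a) (Fin a) ℝ} (hJ : IsActivation J)
    (i : Fin a) : J i i ∈ Set.Icc (0 : ℝ) 1 := by
  rcases hJ.1 i with h | h <;> simp [h]

lemma NormFamily.op_le_one_of_isActivation (F : NormFamily) {a : ℕ}
    {J : Matrix (Fin a) (Fin a) ℝ} (hJ : IsActivation J) : F.op J ≤ 1 := by
  refine F.op_le zero_le_one fun x => ?_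
  rw [one_mul, hJ.eq_diagonal]
  refine F.mono a _ _ fun i => ?_
  rw [Matrix.mulVec_diagonal, abs_mul, abs_of_nonneg (hJ.apply_mem_Icc i).1]
  exact mul_le_of_le_one_left (abs_nonneg _) (hJ.apply_mem_Icc i).2

lemma NormFamily.op_innerProdFrom_le (F : NormFamily) {c : ℕ → ℕ}
    {W : ∀ m, Matrix (Fin (c (m+1))) (Fin (c m)) ℝ}
    {J : ∀ m, Matrix (Fin (c (m+1))) (Fin (c (m+1))) ℝ} (hJ : ∀ m, IsActivation (J m))
    (a : ℕ) : ∀ m, F.op (innerProdFrom c W J a m) ≤ ∏ i ∈ Finset.range m, F.op (W (a + i))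
  | 0 => by simpa [innerProdFrom] using F.op_one_le (c a)
  | m + 1 => by
    rw [innerProdFrom, Finset.prod_range_succ, mul_comm _ (F.op (W (a + m)))]
    calc F.op (J (a + m) * W (a + m) * innerProdFrom c W J a m)
        ≤ F.op (J (a + m)) * F.op (W (a + m)) * F.op (innerProdFrom c W J a m) :=
          (F.op_mul_le _ _).trans
            (mul_le_mul_of_nonneg_right (F.op_mul_le _ _) (F.op_nonneg _))
      _ ≤ F.op (W (a + m)) * ∏ i ∈ Finset.range m, F.op (W (a + i)) :=
          mul_le_mul (mul_le_of_le_one_left (F.op_nonneg _) (F.op_le_one_of_isActivation (hJ _)))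
            (F.op_innerProdFrom_le hJ a m) (F.op_nonneg _) (F.op_nonneg _)

section DescProd

variable {M : Type*} [Monoid M]

/-- `descProd f a t = f (t-1) * ⋯ * f a`, the empty product when `t ≤ a`. -/
def descProd (f : ℕ → M) (a t : ℕ) : M := ((List.range' a (t - a)).reverse.map f).prod

lemma descProd_of_le (f : ℕ → M) {a t : ℕ} (h : t ≤ a) : descProd f a t = 1 := by
  simp [descProd, Nat.sub_eq_zero_of_le h]

lemma descProd_succ (f : ℕ → M) {a t : ℕ} (h : a ≤ t) :
    descProd f a (t + 1) = f t * descProd f a t := by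
  rw [descProd, descProd, show t + 1 - a = t - a + 1 by omega, List.range'_concat,
    show a + 1 * (t - a) = t by omega]
  simp

end DescProd

lemma descProd_add_eq {R : Type*} [Ring R] (P E : ℕ → R) {K t : ℕ} (hKt : K ≤ t) :
    descProd (P + E) 0 t = descProd E K t * descProd (P + E) 0 K
      + ∑ k ∈ Finset.Ico K t, descProd E (k + 1) t * P k * descProd (P + E) 0 k := by
  induction t, hKt using Nat.le_induction with
  | base => simp [descProd_of_le]
  | succ t hKt ih =>
    have hshift : ∀ k ∈ Finset.Ico K t, E t * (descProd E (k + 1) t * P k * descProd (P + E) 0 k)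
        = descProd E (k + 1) (t + 1) * P k * descProd (P + E) 0 k := by
      intro k hk
      rw [descProd_succ E (Finset.mem_Ico.mp hk).2, mul_assoc, mul_assoc, mul_assoc]
    have hstep : E t * descProd (P + E) 0 t = descProd E K (t + 1) * descProd (P + E) 0 K
        + ∑ k ∈ Finset.Ico K t, descProd E (k + 1) (t + 1) * P k * descProd (P + E) 0 k := by
      rw [ih, mul_add, Finset.mul_sum, Finset.sum_congr rfl hshift, ← mul_assoc,
        ← descProd_succ E hKt]
    rw [descProd_succ _ (Nat.zero_le t), Pi.add_apply, add_mul, hstep,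
      Finset.sum_Ico_succ_top hKt, descProd_of_le E le_rfl, one_mul]
    abel

section NormedRing

variable {R : Type*} [NormedRing R] [NormOneClass R]

lemma norm_descProd_le (f : ℕ → R) (a : ℕ) :
    ∀ t, ‖descProd f a t‖ ≤ ∏ k ∈ Finset.Ico a t, ‖f k‖
  | 0 => by simp [descProd_of_le f (Nat.zero_le a)]
  | t + 1 => by
    rcases le_or_gt a t with h | h
    · rw [descProd_succ f h, Finset.prod_Ico_succ_top h, mul_comm _ ‖f t‖]
      exact (norm_mul_le _ _).trans
        (mul_le_mul_of_nonneg_left (norm_descProd_le f a t) (norm_nonneg _))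
    · have h' : t + 1 ≤ a := h
      simp [descProd_of_le f h', Finset.Ico_eq_empty_of_le h']

lemma norm_descProd_le_one {f : ℕ → R} (hf : ∀ k, ‖f k‖ ≤ 1) (a t : ℕ) :
    ‖descProd f a t‖ ≤ 1 :=
  (norm_descProd_le f a t).trans (Finset.prod_le_one (fun _ _ => norm_nonneg _) fun k _ => hf k)

lemma norm_descProd_add_le_exp {P E : ℕ → R} (hP : Summable fun k => ‖P k‖)
    (hE : ∀ k, ‖E k‖ ≤ 1) (t : ℕ) :
    ‖descProd (P + E) 0 t‖ ≤ Real.exp (∑' k, ‖P k‖) :=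
  calc ‖descProd (P + E) 0 t‖ ≤ ∏ k ∈ Finset.range t, (1 + ‖P k‖) := by
        rw [Finset.range_eq_Ico]
        refine (norm_descProd_le _ 0 t).trans
          (Finset.prod_le_prod (fun _ _ => norm_nonneg _) fun k _ => ?_)
        rw [add_comm 1]
        exact (norm_add_le _ _).trans (by linarith [hE k])
    _ ≤ Real.exp (∑ k ∈ Finset.range t, ‖P k‖) :=
        Real.prod_one_add_le_exp_sum _ fun _ => norm_nonneg _
    _ ≤ Real.exp (∑' k, ‖P k‖) :=
        Real.exp_le_exp.mpr (hP.sum_le_tsum _ fun _ _ => norm_nonneg _)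

end NormedRing

lemma cauchySeq_of_forall_eventually_dist_le {α : Type*} [PseudoMetricSpace α] {u : ℕ → α}
    (h : ∀ ε > 0, ∃ v : ℕ → α, CauchySeq v ∧ ∀ᶠ t in atTop, dist (u t) (v t) ≤ ε) :
    CauchySeq u := by
  refine Metric.cauchySeq_iff.mpr fun ε hε => ?_
  obtain ⟨v, hv, hclose⟩ := h (ε / 4) (by positivity)
  obtain ⟨N₁, hN₁⟩ := Metric.cauchySeq_iff.mp hv (ε / 2) (by positivity)
  obtain ⟨N₂, hN₂⟩ := eventually_atTop.mp hclose
  refine ⟨max N₁ N₂, fun m hm n hn => ?_⟩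
  have hvmn := hN₁ m (le_of_max_le_left hm) n (le_of_max_le_left hn)
  have hm₂ := hN₂ m (le_of_max_le_right hm)
  have hn₂ := hN₂ n (le_of_max_le_right hn)
  calc dist (u m) (u n) ≤ dist (u m) (v m) + dist (v m) (v n) + dist (v n) (u n) :=
        dist_triangle4 _ _ _ _
    _ < ε := by rw [dist_comm (v n)]; linarith

theorem exists_tendsto_descProd_add {R : Type*} [NormedRing R] [NormOneClass R] [CompleteSpace R]
    {P E : ℕ → R} (hP : Summable fun k => ‖P k‖) (hE : ∀ k, ‖E k‖ ≤ 1)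
    (hEconv : ∀ a, ∃ L, Tendsto (descProd E a) atTop (𝓝 L)) :
    ∃ L, Tendsto (descProd (P + E) 0) atTop (𝓝 L) := by
  set C := Real.exp (∑' k, ‖P k‖)
  have hG := norm_descProd_add_le_exp hP hE
  have hremainder : ∀ K t, K ≤ t →
      dist (descProd (P + E) 0 t) (descProd E K t * descProd (P + E) 0 K)
        ≤ C * ∑' k, ‖P (k + K)‖ := by
    intro K t hKt
    rw [dist_eq_norm, descProd_add_eq P E hKt, add_sub_cancel_left]
    calc ‖∑ k ∈ Finset.Ico K t, descProd E (k + 1) t * P k * descProd (P + E) 0 k‖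
        ≤ ∑ k ∈ Finset.Ico K t, C * ‖P k‖ := by
          refine (norm_sum_le _ _).trans (Finset.sum_le_sum fun k _ => ?_)
          calc ‖descProd E (k + 1) t * P k * descProd (P + E) 0 k‖
              ≤ ‖descProd E (k + 1) t‖ * ‖P k‖ * ‖descProd (P + E) 0 k‖ := norm_mul₃_le
            _ ≤ 1 * ‖P k‖ * C :=
                mul_le_mul (mul_le_mul_of_nonneg_right (norm_descProd_le_one hE _ _)
                  (norm_nonneg _)) (hG k) (norm_nonneg _) (by positivity)
            _ = C * ‖P k‖ := by ring
      _ ≤ C * ∑' k, ‖P (k + K)‖ := by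
          rw [← Finset.mul_sum, Finset.sum_Ico_eq_sum_range]
          refine mul_le_mul_of_nonneg_left ?_ (Real.exp_nonneg _)
          simp_rw [add_comm K]
          exact ((summable_nat_add_iff K).mpr hP).sum_le_tsum _ fun _ _ => norm_nonneg _
  refine cauchySeq_tendsto_of_complete (cauchySeq_of_forall_eventually_dist_le fun ε hε => ?_)
  have htail : Tendsto (fun K => C * ∑' k, ‖P (k + K)‖) atTop (𝓝 (C * 0)) :=
    (tendsto_sum_nat_add fun k => ‖P k‖).const_mul C
  rw [mul_zero] at htail
  obtain ⟨K, hK⟩ := (htail.eventually (ge_mem_nhds hε)).exists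
  obtain ⟨L, hL⟩ := hEconv K
  exact ⟨fun t => descProd E K t * descProd (P + E) 0 K, (hL.mul_const _).cauchySeq,
    eventually_atTop.mpr ⟨K, fun t hKt => (hremainder K t hKt).trans hK⟩⟩

lemma exists_tendsto_prod_Ico_of_mem_Icc {e : ℕ → ℝ} (he : ∀ s, e s ∈ Set.Icc (0 : ℝ) 1)
    (a : ℕ) : ∃ l, Tendsto (fun t => ∏ s ∈ Finset.Ico a t, e s) atTop (𝓝 l) := by
  have hanti : Antitone fun t => ∏ s ∈ Finset.Ico a t, e s :=
    (Finset.prod_anti_set_of_le_one (fun s => (he s).1) fun s => (he s).2).comp_monotone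
      fun _ _ h => Finset.Ico_subset_Ico_right h
  exact ⟨_, tendsto_atTop_ciInf hanti
    ⟨0, by rintro _ ⟨t, rfl⟩; exact Finset.prod_nonneg fun s _ => (he s).1⟩⟩

lemma descProd_diagonal {d : ℕ} (e : ℕ → Fin d → ℝ) (a : ℕ) :
    ∀ t, descProd (fun k => Matrix.diagonal (e k)) a t
      = Matrix.diagonal fun i => ∏ s ∈ Finset.Ico a t, e s i
  | 0 => by simp [descProd_of_le _ (Nat.zero_le a)]
  | t + 1 => by
    rcases le_or_gt a t with h | h
    · rw [descProd_succ _ h, descProd_diagonal e a t, Matrix.diagonal_mul_diagonal]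
      simp_rw [Finset.prod_Ico_succ_top h, mul_comm (e t _)]
    · have h' : t + 1 ≤ a := h
      simp [descProd_of_le _ h', Finset.Ico_eq_empty_of_le h']

lemma exists_tendsto_descProd_of_isActivation {d : ℕ} {E : ℕ → Matrix (Fin d) (Fin d) ℝ}
    (hE : ∀ k, IsActivation (E k)) (a : ℕ) : ∃ L, Tendsto (descProd E a) atTop (𝓝 L) := by
  have hdiag : E = fun k => Matrix.diagonal fun i => E k i i := funext fun k => (hE k).eq_diagonal
  choose l hl using fun i => exists_tendsto_prod_Ico_of_mem_Icc (fun s => (hE s).apply_mem_Icc i) a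
  refine ⟨Matrix.diagonal l, ?_⟩
  rw [hdiag, funext (descProd_diagonal _ a)]
  exact ((continuous_id.matrix_diagonal).tendsto l).comp (tendsto_pi_nhds.mpr hl)

section LinftyOpNorm

attribute [local instance] Matrix.linftyOpNormedAddCommGroup Matrix.linftyOpNormedRing
  Matrix.linftyOpNormedAlgebra

lemma IsActivation.linftyOpNorm_le_one {d : ℕ} {J : Matrix (Fin d) (Fin d) ℝ}
    (hJ : IsActivation J) : ‖J‖ ≤ 1 := by
  rw [hJ.eq_diagonal, Matrix.linfty_opNorm_diagonal]
  refine pi_norm_le_iff_of_nonneg zero_le_one |>.mpr fun i => ?_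
  rw [Real.norm_eq_abs, abs_of_nonneg (hJ.apply_mem_Icc i).1]
  exact (hJ.apply_mem_Icc i).2

lemma Matrix.linfty_opNorm_le_sum_sum_norm {m n α : Type*} [Fintype m] [Fintype n]
    [NormedAddCommGroup α] (M : Matrix m n α) :
    ‖M‖ ≤ ∑ i, ∑ j, ‖M i j‖ := by
  have hrows : ‖M‖₊ ≤ ∑ i, ∑ j, ‖M i j‖₊ := by
    rw [Matrix.linfty_opNNNorm_def]
    exact Finset.sup_le fun i _ =>
      Finset.single_le_sum (f := fun i => ∑ j, ‖M i j‖₊) (fun _ _ => by positivity)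
        (Finset.mem_univ i)
  have hrows' := NNReal.coe_le_coe.mpr hrows
  push_cast at hrows'
  exact hrows'

lemma NormFamily.exists_linftyOpNorm_le_mul_op (F : NormFamily) (a b : ℕ) :
    ∃ κ, ∀ M : Matrix (Fin a) (Fin b) ℝ, ‖M‖ ≤ κ * F.op M := by
  refine ⟨∑ i, ∑ j, F.N b (Pi.single j 1) / F.N a (Pi.single i 1), fun M => ?_⟩
  refine (Matrix.linfty_opNorm_le_sum_sum_norm M).trans ?_
  rw [Finset.sum_mul]
  refine Finset.sum_le_sum fun i _ => ?_
  rw [Finset.sum_mul]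
  refine Finset.sum_le_sum fun j _ => ?_
  rw [div_mul_eq_mul_div, le_div_iff₀ (F.N_single_pos i), Real.norm_eq_abs, mul_comm _ (F.op M)]
  exact F.abs_apply_mul_N_single_le M i j

theorem exists_tendsto_descProd_add_of_isActivation {d : ℕ} (hd : 0 < d) (F : NormFamily)
    {P E : ℕ → Matrix (Fin d) (Fin d) ℝ} (hP : Summable fun k => F.op (P k))
    (hE : ∀ k, IsActivation (E k)) : ∃ L, Tendsto (descProd (P + E) 0) atTop (𝓝 L) := by
  have : Nonempty (Fin d) := ⟨⟨0, hd⟩⟩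
  have : CompleteSpace (Matrix (Fin d) (Fin d) ℝ) := FiniteDimensional.complete ℝ _
  obtain ⟨κ, hnorm⟩ := F.exists_linftyOpNorm_le_mul_op d d
  exact exists_tendsto_descProd_add
    ((hP.mul_left κ).of_nonneg_of_le (fun _ => norm_nonneg _) fun k => hnorm (P k))
    (fun k => (hE k).linftyOpNorm_le_one) (exists_tendsto_descProd_of_isActivation hE)

end LinftyOpNorm

theorem stmt2_general (F : NormFamily)
    (d : ℕ) (hd : 0 < d)
    (q : ℕ → ℕ) (hq : ∀ k, 0 < q k)
    (c : ℕ → ℕ → ℕ)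
    (hc0 : ∀ k, c k 0 = d) (hcq : ∀ k, c k (q k) = d)
    (W : ∀ k m, Matrix (Fin (c k (m+1))) (Fin (c k m)) ℝ)
    (hW : Summable fun k => ∏ m ∈ Finset.range (q k), F.op (W k m)) :
    ∀ J : ∀ k m, Matrix (Fin (c k (m+1))) (Fin (c k (m+1))) ℝ,
      (∀ k m, IsActivation (J k m)) →
        ∃ L, Tendsto (fun n => Aseq d q hq c hc0 hcq W J n) atTop (nhds L) := by
  intro J hJ
  have hlast : ∀ k, c k (q k - 1 + 1) = d := fun k => by rw [Nat.sub_add_cancel (hq k), hcq]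
  let P : ℕ → Matrix (Fin d) (Fin d) ℝ := fun k =>
    mcast (by rw [zero_add, hcq]) (hc0 k) (innerProdFrom (c k) (W k) (J k) 0 (q k))
  let E : ℕ → Matrix (Fin d) (Fin d) ℝ := fun k => mcast (hlast k) (hlast k) (J k (q k - 1))
  have hP : Summable fun k => F.op (P k) :=
    hW.of_nonneg_of_le (fun k => F.op_nonneg _) fun k => by
      rw [F.op_mcast]
      exact (F.op_innerProdFrom_le (hJ k) 0 (q k)).trans_eq
        (Finset.prod_congr rfl fun i _ => by rw [zero_add])
  obtain ⟨L, hL⟩ :=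
    exists_tendsto_descProd_add_of_isActivation hd F hP fun k => (hJ k (q k - 1)).mcast (hlast k)
  -- `Aseq n` is by definition the product of the first `n + 1` blocks `P k + E k`.
  exact ⟨L, hL.comp (tendsto_add_atTop_nat 1)⟩

theorem stmt2 (F : NormFamily)
    (d : ℕ) (hd : 0 < d)
    (q : ℕ → ℕ) (hq : ∀ k, 0 < q k) (hqb : ∃ Q, ∀ k, q k ≤ Q)
    (c : ℕ → ℕ → ℕ) (hcpos : ∀ k m, m ≤ q k → 0 < c k m)
    (hc0 : ∀ k, c k 0 = d) (hcq : ∀ k, c k (q k) = d)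
    (W : ∀ k m, Matrix (Fin (c k (m+1))) (Fin (c k m)) ℝ)
    (hW : Summable fun k => ∏ m ∈ Finset.range (q k), F.op (W k m)) :
    ∀ J : ∀ k m, Matrix (Fin (c k (m+1))) (Fin (c k (m+1))) ℝ,
      (∀ k m, IsActivation (J k m)) →
        ∃ L, Tendsto (fun n => Aseq d q hq c hc0 hcq W J n) atTop (nhds L) :=
  stmt2_general F d hd q hq c hc0 hcq W hW

end
end
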